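/- Assume f(r)²/f'(r) → +∞ as r → +∞. For w₀>0 let ρ*(w₀)>0 be defined by f(ρ*(w₀))=1/w₀. Then the integral I(w₀) = w₀·∫₀^{ρ*(w₀)} f(ρ)²/√(1 − w₀²·f(ρ)²) dρ tends to +∞ as w₀ → 0⁺. -/

import Mathlib

/-!
Write `P = ρ*(w)` and `b = ρ*(2w)`, so that `f b = 1 / (2w)` and `f P = 1 / w`. On `[b, P]` the
integrand is at least `f² ≥ 1 / (4w²)`. As `w → 0⁺` we have `b → ∞`, so `f²/f' ≥ K` on `[b, P]`,
whence `f' ≤ f P² / K = 1 / (K w²)` there and the mean value theorem gives `P - b ≥ wK / 2`.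
Hence `I(w) ≥ w (P - b) / (4w²) ≥ K / 8`.

Since the interval integral of a non-integrable function is `0`, the singularity at `P` must
be shown integrable: `f' ≥ c > 0` on `[b, P]` gives `1 - w²f(ρ)² ≥ 1 - w f(ρ) ≥ wc (P - ρ)`, so
the integrand is `O((P - ρ)^(-1/2))`.
-/

noncomputable section

/-- The radial (cylindrical) coordinate on `ℝ³`. -/
def rad (q : ℝ × ℝ × ℝ) : ℝ := Real.sqrt (q.1 ^ 2 + q.2.1 ^ 2)

/-- The class `𝔉` of weight functions. -/
structure MemF (f : ℝ → ℝ) : Prop where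
  cont : ContinuousOn f (Set.Ici 0)
  zero : f 0 = 0
  pos : ∀ r : ℝ, 0 < r → 0 < f r
  smooth : ContDiffOn ℝ 2 f (Set.Ioi 0)
  ratio_ext : ∃ c : ℝ, Filter.Tendsto (fun r : ℝ => f r * deriv f r / r)
      (nhdsWithin 0 (Set.Ioi 0)) (nhds c)
  strictMono : StrictMonoOn f (Set.Ici 0)
  tendsto_top : Filter.Tendsto f Filter.atTop Filter.atTop
  sq_div_deriv : Filter.Tendsto (fun r : ℝ => f r ^ 2 / deriv f r) Filter.atTop Filter.atTop

open Filter Topology Set MeasureTheory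

def integrandI (f : ℝ → ℝ) (w ρ : ℝ) : ℝ := f ρ ^ 2 / Real.sqrt (1 - w ^ 2 * f ρ ^ 2)

section Integrand

variable {f : ℝ → ℝ} {w : ℝ}

theorem integrandI_nonneg (ρ : ℝ) : 0 ≤ integrandI f w ρ :=
  div_nonneg (sq_nonneg _) (Real.sqrt_nonneg _)

theorem sq_mul_sq_lt_one_of_lt_one_div {u : ℝ} (hw : 0 < w) (hu : 0 ≤ u) (hlt : u < 1 / w) :
    w ^ 2 * u ^ 2 < 1 := by
  have : w * u < 1 := by rwa [lt_div_iff₀ hw, mul_comm] at hlt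
  nlinarith [mul_nonneg hw.le hu]

theorem sq_le_integrandI {ρ : ℝ} (h : w ^ 2 * f ρ ^ 2 < 1) : f ρ ^ 2 ≤ integrandI f w ρ := by
  have hpos : 0 < Real.sqrt (1 - w ^ 2 * f ρ ^ 2) := Real.sqrt_pos.2 (by linarith)
  have hle : Real.sqrt (1 - w ^ 2 * f ρ ^ 2) ≤ 1 :=
    Real.sqrt_le_one.2 (by nlinarith [sq_nonneg (w * f ρ)])
  simpa [integrandI] using div_le_div_of_nonneg_left (sq_nonneg (f ρ)) hpos hle

theorem integrandI_le {c ρ P : ℝ} (hw : 0 < w) (hc : 0 < c) (hρP : ρ < P) (hfρ : 0 ≤ f ρ)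
    (hsub : c * (P - ρ) ≤ 1 / w - f ρ) :
    integrandI f w ρ ≤ (1 / w) ^ 2 / Real.sqrt (w * c) * (P - ρ) ^ (-(1 / 2) : ℝ) := by
  have hPρ : 0 < P - ρ := sub_pos.2 hρP
  have hwf : w * f ρ ≤ 1 - w * (c * (P - ρ)) := by
    have h := mul_le_mul_of_nonneg_left hsub hw.le
    rw [mul_sub w (1 / w), mul_one_div_cancel hw.ne'] at h
    linarith
  have hgap : w * c * (P - ρ) ≤ 1 - w ^ 2 * f ρ ^ 2 := by
    nlinarith [mul_nonneg hw.le hfρ, mul_pos (mul_pos hw hc) hPρ]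
  have hfρ_le : f ρ ≤ 1 / w := by
    rw [le_div_iff₀ hw]; nlinarith [mul_pos (mul_pos hw hc) hPρ]
  rw [Real.rpow_neg hPρ.le, ← Real.sqrt_eq_rpow, ← div_eq_mul_inv, div_div,
    ← Real.sqrt_mul (by positivity)]
  exact div_le_div₀ (by positivity) (pow_le_pow_left₀ hfρ hfρ_le 2)
    (Real.sqrt_pos.2 (by positivity)) (Real.sqrt_le_sqrt hgap)

theorem continuousOn_integrandI {s : Set ℝ} (hcont : ContinuousOn f s)
    (hlt : ∀ ρ ∈ s, w ^ 2 * f ρ ^ 2 < 1) : ContinuousOn (integrandI f w) s :=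
  (hcont.pow 2).div (continuousOn_const.sub (continuousOn_const.mul (hcont.pow 2))).sqrt
    fun ρ hρ => (Real.sqrt_pos.2 (sub_pos.2 (hlt ρ hρ))).ne'

theorem intervalIntegrable_integrandI_of_lt {a b : ℝ} (hab : a ≤ b)
    (hcont : ContinuousOn f (Icc a b)) (hlt : ∀ ρ ∈ Icc a b, w ^ 2 * f ρ ^ 2 < 1) :
    IntervalIntegrable (integrandI f w) volume a b :=
  (continuousOn_integrandI hcont hlt).intervalIntegrable_of_Icc hab

theorem intervalIntegrable_integrandI_of_mul_sub_le {a c P : ℝ} (hw : 0 < w) (hc : 0 < c)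
    (haP : a ≤ P) (hcont : ContinuousOn f (Icc a P))
    (hbound : ∀ ρ ∈ Icc a P, 0 ≤ f ρ ∧ c * (P - ρ) ≤ 1 / w - f ρ) :
    IntervalIntegrable (integrandI f w) volume a P := by
  have hlt : ∀ ρ ∈ Ioo a P, w ^ 2 * f ρ ^ 2 < 1 := fun ρ hρ => by
    obtain ⟨hfρ, hsub⟩ := hbound ρ (Ioo_subset_Icc_self hρ)
    exact sq_mul_sq_lt_one_of_lt_one_div hw hfρ (by nlinarith [sub_pos.2 hρ.2])
  have hdom : IntervalIntegrable
      (fun ρ => (1 / w) ^ 2 / Real.sqrt (w * c) * (P - ρ) ^ (-(1 / 2) : ℝ)) volume a P := by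
    have := ((intervalIntegral.intervalIntegrable_rpow' (r := -(1 / 2)) (by norm_num)
      (a := P - a) (b := P - P)).comp_sub_left P).const_mul ((1 / w) ^ 2 / Real.sqrt (w * c))
    simpa using this
  refine hdom.mono_fun' ?_ ?_ <;> rw [uIoc_of_le haP, ← Measure.restrict_congr_set Ioo_ae_eq_Ioc]
  · exact (continuousOn_integrandI (hcont.mono Ioo_subset_Icc_self) hlt).aestronglyMeasurable
      measurableSet_Ioo
  · refine ae_restrict_of_forall_mem measurableSet_Ioo fun ρ hρ => ?_
    obtain ⟨hfρ, hsub⟩ := hbound ρ (Ioo_subset_Icc_self hρ)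
    change ‖integrandI f w ρ‖ ≤ _
    rw [Real.norm_of_nonneg (integrandI_nonneg ρ)]
    exact integrandI_le hw hc hρ.2 hfρ hsub

theorem mul_sq_le_integral_integrandI {a P m : ℝ} (haP : a ≤ P)
    (hint : IntervalIntegrable (integrandI f w) volume a P) (hm : 0 ≤ m)
    (hbound : ∀ ρ ∈ Ioo a P, m ≤ f ρ ∧ w ^ 2 * f ρ ^ 2 < 1) :
    (P - a) * m ^ 2 ≤ ∫ ρ in a..P, integrandI f w ρ := by
  calc (P - a) * m ^ 2 = ∫ _ in a..P, m ^ 2 := by simp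
    _ ≤ ∫ ρ in a..P, integrandI f w ρ :=
      intervalIntegral.integral_mono_on_of_le_Ioo haP intervalIntegrable_const hint
        fun ρ hρ => (pow_le_pow_left₀ hm (hbound ρ hρ).1 2).trans
          (sq_le_integrandI (hbound ρ hρ).2)

end Integrand

theorem tendsto_atTop_of_monotoneOn_Ici {α : Type*} {f : ℝ → ℝ} (hf : MonotoneOn f (Ici 0))
    {g : α → ℝ} {l : Filter α} (hg : ∀ᶠ x in l, 0 ≤ g x)
    (h : Tendsto (fun x => f (g x)) l atTop) : Tendsto g l atTop := by
  refine tendsto_atTop.2 fun R => ?_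
  filter_upwards [hg, h.eventually_gt_atTop (f (max R 0))] with x hx hfx
  by_contra! hlt
  exact hfx.not_ge (hf hx (le_max_right R 0) (hlt.le.trans (le_max_left R 0)))

namespace MemF

variable {f : ℝ → ℝ}

theorem nonneg (hf : MemF f) {r : ℝ} (hr : 0 ≤ r) : 0 ≤ f r := by
  rcases hr.eq_or_lt with rfl | hr
  · exact hf.zero.ge
  · exact (hf.pos r hr).le

theorem continuousOn_Icc (hf : MemF f) {a b : ℝ} (ha : 0 ≤ a) : ContinuousOn f (Icc a b) :=
  hf.cont.mono fun _ hx => ha.trans hx.1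

theorem differentiableOn_Ioo (hf : MemF f) {a b : ℝ} (ha : 0 ≤ a) :
    DifferentiableOn ℝ f (Ioo a b) :=
  (hf.smooth.differentiableOn (by norm_num)).mono fun _ hx => ha.trans_lt hx.1

theorem eventually_deriv_pos_and_mul_le (hf : MemF f) {K : ℝ} (hK : 0 < K) :
    ∀ᶠ r in atTop, 0 < deriv f r ∧ K * deriv f r ≤ f r ^ 2 := by
  filter_upwards [hf.sq_div_deriv.eventually_ge_atTop K] with r hr
  have hd : 0 < deriv f r := by
    by_contra! h
    exact (hK.trans_le hr).not_ge (div_nonpos_of_nonneg_of_nonpos (sq_nonneg _) h)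
  exact ⟨hd, by rw [le_div_iff₀ hd] at hr; linarith⟩

theorem exists_pos_mul_sub_le (hf : MemF f) {b P : ℝ} (hb : 0 < b) (hbP : b ≤ P)
    (hderiv : ∀ x ∈ Icc b P, 0 < deriv f x) :
    ∃ c > 0, ∀ x ∈ Icc b P, c * (P - x) ≤ f P - f x := by
  have hcont : ContinuousOn (deriv f) (Icc b P) :=
    (hf.smooth.continuousOn_deriv_of_isOpen isOpen_Ioi (by norm_num)).mono
      fun _ hx => hb.trans_le hx.1
  obtain ⟨ξ, hξ, hmin⟩ := isCompact_Icc.exists_isMinOn (nonempty_Icc.2 hbP) hcont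
  refine ⟨deriv f ξ, hderiv ξ hξ, fun x hx => ?_⟩
  refine (convex_Icc b P).mul_sub_le_image_sub_of_le_deriv (hf.continuousOn_Icc hb.le)
    (by simpa using hf.differentiableOn_Ioo (b := P) hb.le) (fun y hy => ?_) x hx P
    (right_mem_Icc.2 hbP) hx.2
  rw [interior_Icc] at hy
  exact hmin (Ioo_subset_Icc_self hy)

theorem intervalIntegrable_integrandI (hf : MemF f) {w b P : ℝ} (hw : 0 < w) (hb : 0 < b)
    (hbP : b ≤ P) (hfb : f b < 1 / w) (hfP : f P = 1 / w)
    (hderiv : ∀ x ∈ Icc b P, 0 < deriv f x) :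
    IntervalIntegrable (integrandI f w) volume 0 P := by
  obtain ⟨c, hc, hsub⟩ := hf.exists_pos_mul_sub_le hb hbP hderiv
  refine IntervalIntegrable.trans (b := b) ?_ ?_
  · exact intervalIntegrable_integrandI_of_lt hb.le (hf.continuousOn_Icc le_rfl) fun x hx =>
      sq_mul_sq_lt_one_of_lt_one_div hw (hf.nonneg hx.1) ((hf.strictMono.monotoneOn hx.1 hb.le hx.2).trans_lt hfb)
  · exact intervalIntegrable_integrandI_of_mul_sub_le hw hc hbP (hf.continuousOn_Icc hb.le)
      fun x hx => ⟨hf.nonneg (hb.le.trans hx.1), hfP ▸ hsub x hx⟩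

theorem sub_le_sq_div_mul_sub (hf : MemF f) {b P K : ℝ} (hK : 0 < K) (hb : 0 ≤ b)
    (hbP : b ≤ P) (hderiv : ∀ x ∈ Ioo b P, K * deriv f x ≤ f x ^ 2) :
    f P - f b ≤ f P ^ 2 / K * (P - b) := by
  refine (convex_Icc b P).image_sub_le_mul_sub_of_deriv_le (hf.continuousOn_Icc hb)
    (by simpa using hf.differentiableOn_Ioo (b := P) hb) (fun x hx => ?_) b
    (left_mem_Icc.2 hbP) P (right_mem_Icc.2 hbP) hbP
  rw [interior_Icc] at hx
  have hx0 : 0 ≤ x := hb.trans hx.1.le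
  rw [le_div_iff₀ hK, mul_comm]
  exact (hderiv x hx).trans
    (pow_le_pow_left₀ (hf.nonneg hx0) (hf.strictMono.monotoneOn hx0 (hx0.trans hx.2.le) hx.2.le) 2)

theorem le_mul_integral_integrandI (hf : MemF f) {w b P K : ℝ} (hw : 0 < w) (hK : 0 < K)
    (hb : 0 < b) (hfb : f b = 1 / (2 * w)) (hP : 0 < P) (hfP : f P = 1 / w)
    (hderiv : ∀ x, b ≤ x → 0 < deriv f x ∧ K * deriv f x ≤ f x ^ 2) :
    K / 8 ≤ w * ∫ ρ in (0 : ℝ)..P, integrandI f w ρ := by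
  have hfbP : f b < f P := by
    rw [hfb, hfP]; exact one_div_lt_one_div_of_lt hw (by linarith)
  have hbP : b < P := (hf.strictMono.lt_iff_lt hb.le hP.le).1 hfbP
  have hint : IntervalIntegrable (integrandI f w) volume 0 P :=
    hf.intervalIntegrable_integrandI hw hb hbP.le (hfP ▸ hfbP) hfP
      fun x hx => (hderiv x hx.1).1
  have hwidth : w * K / 2 ≤ P - b := by
    have h := hf.sub_le_sq_div_mul_sub hK hb.le hbP.le fun x hx => (hderiv x hx.1.le).2
    rw [hfP, hfb] at h
    field_simp at h
    nlinarith
  have hlower : (P - b) * (1 / (2 * w)) ^ 2 ≤ ∫ ρ in b..P, integrandI f w ρ := by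
    refine mul_sq_le_integral_integrandI hbP.le
      (hint.mono_set (uIcc_subset_uIcc_right (mem_uIcc_of_le hb.le hbP.le))) (by positivity)
      fun x hx => ?_
    have hx0 : 0 ≤ x := hb.le.trans hx.1.le
    exact ⟨hfb ▸ hf.strictMono.monotoneOn hb.le hx0 hx.1.le,
      sq_mul_sq_lt_one_of_lt_one_div hw (hf.nonneg hx0) (hfP ▸ hf.strictMono hx0 hP.le hx.2)⟩
  calc K / 8 ≤ w * ((P - b) * (1 / (2 * w)) ^ 2) := by
        field_simp
        nlinarith
    _ ≤ w * ∫ ρ in b..P, integrandI f w ρ := by gcongr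
    _ ≤ w * ∫ ρ in (0 : ℝ)..P, integrandI f w ρ := by
        gcongr
        exact intervalIntegral.integral_mono_interval hb.le hbP.le le_rfl
          (ae_of_all _ integrandI_nonneg) hint

end MemF

/-- with `ρ*(w₀)` defined by `f(ρ*(w₀)) = 1/w₀`, the integral
`I(w₀) = w₀·∫₀^{ρ*(w₀)} f(ρ)²/√(1 − w₀²f(ρ)²) dρ` tends to `+∞` as `w₀ → 0⁺`. -/
theorem I_tendsto_atTop
    (f : ℝ → ℝ) (hf : MemF f)
    (ρs : ℝ → ℝ)
    (hρs : ∀ w : ℝ, 0 < w → 0 < ρs w ∧ f (ρs w) = 1 / w) :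
    Filter.Tendsto
      (fun w : ℝ => w * ∫ ρ in (0:ℝ)..(ρs w), f ρ ^ 2 / Real.sqrt (1 - w ^ 2 * f ρ ^ 2))
      (nhdsWithin 0 (Set.Ioi 0)) Filter.atTop := by
  refine tendsto_atTop.2 fun M => ?_
  have hK : 0 < 8 * max M 1 := by positivity
  have hb : Tendsto (fun w => ρs (2 * w)) (𝓝[>] 0) atTop := by
    refine tendsto_atTop_of_monotoneOn_Ici hf.strictMono.monotoneOn
      (eventually_nhdsWithin_of_forall fun w hw => (hρs _ (mul_pos two_pos hw)).1.le)
      ((tendsto_inv_nhdsGT_zero.const_mul_atTop (by norm_num : (0 : ℝ) < 1 / 2)).congr' ?_)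
    filter_upwards [self_mem_nhdsWithin] with w hw
    rw [(hρs _ (mul_pos two_pos hw)).2]
    ring
  filter_upwards [self_mem_nhdsWithin,
    hb.eventually (eventually_forall_ge_atTop.2 (hf.eventually_deriv_pos_and_mul_le hK))]
    with w hw hderiv
  obtain ⟨hb₀, hfb⟩ := hρs (2 * w) (mul_pos two_pos hw)
  obtain ⟨hP₀, hfP⟩ := hρs w hw
  calc M ≤ 8 * max M 1 / 8 := by linarith [le_max_left M 1]
    _ ≤ _ := hf.le_mul_integral_integrandI hw hK hb₀ hfb hP₀ hfP hderiv
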